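/- arXiv:2605.15778 — 2 statements merged into one kernel-verified Lean document; each statement's English description precedes it below -/
import Mathlib

section
/- Let V and E be finite sets with maps s, t : E → V. For each v let (M_v, d_v) be a metric space, and equip P = ∀ v, M_v with the ℓ¹ metric d(x,y) = ∑_v d_v(x_v, y_v). Suppose for each e there is a map δ_e : M_{s(e)} → M_{s(e)} that is k_e-Lipschitz, and for each v a map α_v aggregating the tuple (p_e)_{t(e)=v} into M_v such that d_v(α_v(p), α_v(q)) ≤ ∑_{t(e)=v} L_{v,e} · d_{s(e)}(p_e, q_e). Define Φ(x)_v = α_v((δ_e(x_{s(e)}))_{t(e)=v}). Then Φ is Lipschitz on P with constant max over w ∈ V of ∑_{e : s(e)=w} L_{t(e),e} · k_e. -/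
open scoped NNReal

/-- The ℓ¹ contraction estimate for the factored clearing operator. -/
theorem stmt_10 {V E : Type*} [Fintype V] [Fintype E] [DecidableEq V]
    (s t : E → V) (M : V → Type*) [∀ v, MetricSpace (M v)]
    (δ : ∀ e, M (s e) → M (s e)) (k : E → ℝ≥0)
    (hδ : ∀ e a b, dist (δ e a) (δ e b) ≤ (k e : ℝ) * dist a b)
    (α : ∀ v, (∀ e : {e : E // t e = v}, M (s e.1)) → M v)
    (L : V → E → ℝ≥0)
    (hα : ∀ v p q, dist (α v p) (α v q) ≤
      ∑ e : {e : E // t e = v}, (L v e.1 : ℝ) * dist (p e) (q e))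
    (Φ : (∀ v, M v) → ∀ v, M v)
    (hΦ : ∀ x v, Φ x v = α v (fun e => δ e.1 (x (s e.1)))) :
    ∀ x y : ∀ v, M v,
      ∑ v, dist (Φ x v) (Φ y v) ≤
        ((Finset.univ.sup fun w =>
            ∑ e ∈ Finset.univ.filter (fun e => s e = w), L (t e) e * k e : ℝ≥0) : ℝ) *
          ∑ v, dist (x v) (y v) := by
  intro x y
  set C : ℝ≥0 := Finset.univ.sup fun w =>
      ∑ e ∈ Finset.univ.filter (fun e => s e = w), L (t e) e * k e with hC
  have step1 : ∀ v, dist (Φ x v) (Φ y v) ≤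
      ∑ e ∈ Finset.univ.filter (fun e => t e = v),
        (L (t e) e : ℝ) * (k e : ℝ) * dist (x (s e)) (y (s e)) := by
    intro v
    rw [hΦ, hΦ]
    calc dist _ _ ≤ ∑ e : {e : E // t e = v},
          (L v e.1 : ℝ) * dist (δ e.1 (x (s e.1))) (δ e.1 (y (s e.1))) := hα v _ _
      _ ≤ ∑ e : {e : E // t e = v},
          (L v e.1 : ℝ) * ((k e.1 : ℝ) * dist (x (s e.1)) (y (s e.1))) := by
          apply Finset.sum_le_sum
          intro e _
          exact mul_le_mul_of_nonneg_left (hδ e.1 _ _) (by positivity)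
      _ = ∑ e ∈ Finset.univ.filter (fun e => t e = v),
          (L (t e) e : ℝ) * (k e : ℝ) * dist (x (s e)) (y (s e)) := by
          rw [Finset.sum_subtype (p := fun e => t e = v) (Finset.univ.filter (fun e => t e = v))
            (by simp) (fun e => (L (t e) e : ℝ) * (k e : ℝ) * dist (x (s e)) (y (s e)))]
          apply Finset.sum_congr rfl
          intro e _
          rw [e.2, mul_assoc]
  calc ∑ v, dist (Φ x v) (Φ y v)
      ≤ ∑ v, ∑ e ∈ Finset.univ.filter (fun e => t e = v),
          (L (t e) e : ℝ) * (k e : ℝ) * dist (x (s e)) (y (s e)) :=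
        Finset.sum_le_sum fun v _ => step1 v
    _ = ∑ e, (L (t e) e : ℝ) * (k e : ℝ) * dist (x (s e)) (y (s e)) :=
        Finset.sum_fiberwise _ _ _
    _ = ∑ w, ∑ e ∈ Finset.univ.filter (fun e => s e = w),
          (L (t e) e : ℝ) * (k e : ℝ) * dist (x (s e)) (y (s e)) :=
        (Finset.sum_fiberwise _ _ _).symm
    _ = ∑ w, (∑ e ∈ Finset.univ.filter (fun e => s e = w),
          (L (t e) e : ℝ) * (k e : ℝ)) * dist (x w) (y w) := by
        apply Finset.sum_congr rfl
        intro w _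
        rw [Finset.sum_mul]
        apply Finset.sum_congr rfl
        intro e he
        simp only [Finset.mem_filter] at he
        rw [he.2]
    _ ≤ ∑ w, (C : ℝ) * dist (x w) (y w) := by
        apply Finset.sum_le_sum
        intro w _
        apply mul_le_mul_of_nonneg_right _ dist_nonneg
        have : (∑ e ∈ Finset.univ.filter (fun e => s e = w), L (t e) e * k e) ≤ C :=
          Finset.le_sup (f := fun w => ∑ e ∈ Finset.univ.filter (fun e => s e = w), L (t e) e * k e) (Finset.mem_univ w)
        calc (∑ e ∈ Finset.univ.filter (fun e => s e = w), (L (t e) e : ℝ) * (k e : ℝ))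
            = ((∑ e ∈ Finset.univ.filter (fun e => s e = w), L (t e) e * k e : ℝ≥0) : ℝ) := by
              push_cast; rfl
          _ ≤ (C : ℝ) := by exact_mod_cast this
    _ = (C : ℝ) * ∑ v, dist (x v) (y v) := by rw [Finset.mul_sum]
end

section
/- Let n be a positive integer, c : Fin n → ℝ≥0 external assets, and ℓ : Fin n → Fin n → ℝ≥0 nominal liabilities with total liabilities L(i) = ∑_j ℓ i j. Define Φ : (Fin n → ℝ≥0) → (Fin n → ℝ≥0) by Φ(x)(v) = min(L(v), c(v) + ∑_{u} min(x(u) * ℓ u v / L(u), ℓ u v)), where the summand is interpreted as 0 when L(u) = 0. Then Φ is monotone with respect to the componentwise order. -/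
open scoped NNReal

/-- Monotonicity of the Eisenberg–Noe clearing operator. -/
theorem stmt_12 (n : ℕ) (hn : 0 < n) (c : Fin n → ℝ≥0) (ℓ : Fin n → Fin n → ℝ≥0) :
    Monotone (fun (x : Fin n → ℝ≥0) (v : Fin n) =>
      min (∑ j, ℓ v j)
        (c v + ∑ u, min (x u * ℓ u v / ∑ j, ℓ u j) (ℓ u v))) := by
  intro x y hxy v
  dsimp only
  gcongr
  exact hxy _
end
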